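/- Let U be a nonempty finite set and for each u ∈ U let R^u be a random variable with values in a finite set Λ ⊂ ℝ; fix α ∈ (0,1]. A policy u ∈ U satisfies VaR^u = min_{u' ∈ U} VaR^{u'} if and only if max_{u' ∈ U} P(R^{u'} ≤ λ₋) < α, where λ₋ is the left predecessor of VaR^u in Λ. -/
import Mathlib


open MeasureTheory Finset

noncomputable def cdfOf {Ω : Type*} [MeasurableSpace Ω] (μ : Measure Ω) (X : Ω → ℝ) (l : ℝ) : ℝ :=
  (μ {ω | X ω ≤ l}).toReal

noncomputable def VaR {Ω : Type*} [MeasurableSpace Ω] (μ : Measure Ω) (X : Ω → ℝ) (α : ℝ) : ℝ :=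
  sInf {l : ℝ | α ≤ cdfOf μ X l}

noncomputable def VaRFin {Ω : Type*} [MeasurableSpace Ω] (μ : Measure Ω) (X : Ω → ℝ)
    (Λ : Finset ℝ) (α : ℝ) : ℝ :=
  sInf {l : ℝ | l ∈ Λ ∧ α ≤ cdfOf μ X l}

noncomputable def leftPred (Y : Finset ℝ) (hY : Y.Nonempty) (l : ℝ) : ℝ :=
  if h : Y.min' hY < l then
    (Y.filter fun y => y < l).max' ⟨Y.min' hY, Finset.mem_filter.mpr ⟨Y.min'_mem hY, h⟩⟩
  else l - 1

lemma cdf_mono {Ω : Type*} [MeasurableSpace Ω] (μ : Measure Ω) [IsProbabilityMeasure μ]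
    (X : Ω → ℝ) : Monotone (cdfOf μ X) := fun a b hab =>
  ENNReal.toReal_mono (measure_ne_top μ _) (measure_mono fun ω h => le_trans h hab)

theorem stmt13 {Ω U : Type*} [MeasurableSpace Ω] [Fintype U] [Nonempty U]
    (μ : Measure Ω) [IsProbabilityMeasure μ]
    (R : U → Ω → ℝ) (Λ : Finset ℝ) (hΛ : Λ.Nonempty)
    (hR : ∀ u ω, R u ω ∈ Λ) (α : ℝ) (hα0 : 0 < α) (hα1 : α ≤ 1)
    (u : U) :
    VaRFin μ (R u) Λ α
        = Finset.univ.inf' Finset.univ_nonempty (fun u' => VaRFin μ (R u') Λ α)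
      ↔ Finset.univ.sup' Finset.univ_nonempty
          (fun u' => cdfOf μ (R u') (leftPred Λ hΛ (VaRFin μ (R u) Λ α))) < α := by
  classical
  set T : U → Finset ℝ := fun u' => Λ.filter (fun l => α ≤ cdfOf μ (R u') l) with hTdef
  have hT : ∀ u', (T u').Nonempty := by
    intro u'
    refine ⟨Λ.max' hΛ, Finset.mem_filter.mpr ⟨Λ.max'_mem hΛ, ?_⟩⟩
    have : {ω | R u' ω ≤ Λ.max' hΛ} = Set.univ := by
      ext ω; simp [Λ.le_max' _ (hR u' ω)]
    simp [cdfOf, this, hα1]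
  have hV : ∀ u', VaRFin μ (R u') Λ α = (T u').min' (hT u') := by
    intro u'
    have hset : {l : ℝ | l ∈ Λ ∧ α ≤ cdfOf μ (R u') l} = ↑(T u') := by
      ext l; simp [hTdef]
    rw [VaRFin, hset, (hT u').csInf_eq_min']
  -- basic facts about v := VaRFin u
  set v := VaRFin μ (R u) Λ α with hv
  have hvmem : v ∈ Λ := by
    have := (T u).min'_mem (hT u)
    rw [hv, hV u]
    exact (Finset.mem_filter.mp this).1
  have hvcdf : α ≤ cdfOf μ (R u) v := by
    have := (T u).min'_mem (hT u)
    have h2 := (Finset.mem_filter.mp this).2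
    rw [hv, hV u]; exact h2
  -- LHS characterization
  have hLHS : (v = Finset.univ.inf' Finset.univ_nonempty (fun u' => VaRFin μ (R u') Λ α))
      ↔ ∀ u' : U, ∀ l ∈ Λ, l < v → cdfOf μ (R u') l < α := by
    constructor
    · intro h u' l hl hlv
      by_contra hcon
      push_neg at hcon
      have hlT : l ∈ T u' := Finset.mem_filter.mpr ⟨hl, hcon⟩
      have h1 : VaRFin μ (R u') Λ α ≤ l := by rw [hV u']; exact Finset.min'_le _ _ hlT
      have h2 : v ≤ VaRFin μ (R u') Λ α := h ▸ Finset.inf'_le _ (Finset.mem_univ u')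
      linarith
    · intro h
      refine le_antisymm ?_ (Finset.inf'_le _ (Finset.mem_univ u))
      refine Finset.le_inf' _ _ fun u' _ => ?_
      rw [hV u']
      refine Finset.le_min' _ _ _ fun y hy => ?_
      by_contra hcon
      push_neg at hcon
      have := h u' y (Finset.mem_filter.mp hy).1 hcon
      exact absurd (Finset.mem_filter.mp hy).2 (not_le.mpr this)
  rw [hLHS, Finset.sup'_lt_iff]
  by_cases hmin : Λ.min' hΛ < v
  · -- v is not the minimum of Λ
    set lp := (Λ.filter fun y => y < v).max'
        ⟨Λ.min' hΛ, Finset.mem_filter.mpr ⟨Λ.min'_mem hΛ, hmin⟩⟩ with hlp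
    have hlpv : leftPred Λ hΛ v = lp := by rw [leftPred, dif_pos hmin]
    have hlpmem := (Λ.filter fun y => y < v).max'_mem
        ⟨Λ.min' hΛ, Finset.mem_filter.mpr ⟨Λ.min'_mem hΛ, hmin⟩⟩
    have hlpΛ : lp ∈ Λ := (Finset.mem_filter.mp hlpmem).1
    have hlplt : lp < v := (Finset.mem_filter.mp hlpmem).2
    have hle : ∀ y ∈ Λ, y < v → y ≤ lp := by
      intro y hy hyv
      rw [hlp]
      have hmem : y ∈ Λ.filter (fun z => z < v) := Finset.mem_filter.mpr ⟨hy, hyv⟩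
      exact Finset.le_max' _ _ hmem
    rw [hlpv]
    constructor
    · intro h u' _
      exact h u' lp hlpΛ hlplt
    · intro h u' l hl hlv
      exact lt_of_le_of_lt (cdf_mono μ (R u') (hle l hl hlv)) (h u' (Finset.mem_univ u'))
  · -- v is the minimum of Λ
    have hveq : v = Λ.min' hΛ := le_antisymm (not_lt.mp hmin) (Λ.min'_le _ hvmem)
    have hlpv : leftPred Λ hΛ v = v - 1 := by rw [leftPred, dif_neg hmin]
    have hzero : ∀ u' : U, cdfOf μ (R u') (v - 1) = 0 := by
      intro u'
      have : {ω | R u' ω ≤ v - 1} = ∅ := by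
        ext ω
        simp only [Set.mem_setOf_eq, Set.mem_empty_iff_false, iff_false, not_le]
        have := Λ.min'_le _ (hR u' ω)
        rw [← hveq] at this
        linarith
      simp [cdfOf, this]
    constructor
    · intro _ u' _
      rw [hlpv, hzero u']; exact hα0
    · intro _ u' l hl hlv
      have := Λ.min'_le _ hl
      rw [← hveq] at this
      linarith
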